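/- arXiv:2405.04984 — 3 statements merged into one kernel-verified Lean document; each statement's English description precedes it below -/
import Mathlib

section
/- Let α > 0 be a real number and let f : ℕ → ℝ satisfy f(0) = 0 and, for every integer k ≥ 1, f(k) ≤ 2α + (1/k)·∑_{j=0}^{k−1} f(j). Then for every natural number n, f(n) ≤ 2α·H(n), where H(n) denotes the n-th harmonic number. -/
/-- The `n`-th harmonic number `H(n) = ∑_{i=1}^{n} 1/i`, with `H(0) = 0`. -/
noncomputable def harmonicNumber (n : ℕ) : ℝ := ∑ i ∈ Finset.range n, (1 : ℝ) / (i + 1)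

lemma harmonic_sum_id (k : ℕ) :
    ∑ j ∈ Finset.range k, harmonicNumber j = k * harmonicNumber k - k := by
  induction k with
  | zero => simp [harmonicNumber]
  | succ n ih =>
    rw [Finset.sum_range_succ, ih]
    have h : harmonicNumber (n + 1) = harmonicNumber n + 1 / (n + 1) := by
      simp [harmonicNumber, Finset.sum_range_succ]
    push_cast
    rw [h]
    have : ((n : ℝ) + 1) ≠ 0 := by positivity
    field_simp
    ring

/-- If `f 0 = 0` and `f k ≤ 2α + (1/k) ∑_{j=0}^{k-1} f j` for all `k ≥ 1`, then
`f n ≤ 2α · H(n)` where `H(n)` is the `n`-th harmonic number. -/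
theorem per_phase_averaging_bound (α : ℝ) (hα : 0 < α) (f : ℕ → ℝ)
    (hf0 : f 0 = 0)
    (hrec : ∀ k : ℕ, 1 ≤ k → f k ≤ 2 * α + (1 / k) * ∑ j ∈ Finset.range k, f j) :
    ∀ n : ℕ, f n ≤ 2 * α * harmonicNumber n := by
  intro n
  induction n using Nat.strong_induction_on with
  | _ n ih =>
    match n with
    | 0 => simp [hf0, harmonicNumber]
    | (k+1) =>
      have hk1 : (1:ℕ) ≤ k+1 := Nat.le_add_left 1 k
      have hsum : ∑ j ∈ Finset.range (k+1), f j ≤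
          2 * α * (∑ j ∈ Finset.range (k+1), harmonicNumber j) := by
        rw [Finset.mul_sum]
        exact Finset.sum_le_sum fun j hj => ih j (Finset.mem_range.mp hj)
      have hpos : (0:ℝ) < (k:ℝ) + 1 := by positivity
      have := hrec (k+1) hk1
      have hstep : (1 / ((k:ℝ)+1)) * ∑ j ∈ Finset.range (k+1), f j ≤
          (1 / ((k:ℝ)+1)) * (2 * α * (∑ j ∈ Finset.range (k+1), harmonicNumber j)) := by
        apply mul_le_mul_of_nonneg_left hsum
        positivity
      rw [harmonic_sum_id] at hstep
      push_cast at this hstep ⊢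
      calc f (k+1) ≤ 2*α + (1 / ((k:ℝ)+1)) * ∑ j ∈ Finset.range (k+1), f j := this
        _ ≤ 2*α + (1 / ((k:ℝ)+1)) * (2 * α * (((k:ℝ)+1) * harmonicNumber (k+1) - ((k:ℝ)+1))) := by
            linarith
        _ = 2 * α * harmonicNumber (k+1) := by field_simp; ring
end

section
/- Let α > 0, let n ≥ 1 be a natural number, let S be a type (the set of all possible states), let S₀ ⊆ S be a subset (the states present at the beginning of the phase), and let c : S → Fin n → ℝ be a nonnegative cost function such that for every state s ∈ S₀, ∑_{i=0}^{n−1} c(s, i) ≥ α. Then for every state sequence σ : Fin n → S with σ(0) ∈ S₀, the total cost ∑_{i=0}^{n−1} c(σ(i), i) + α · |{i : i+1 < n and σ(i+1) ≠ σ(i)}| is at least α. -/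
/-- In a phase of a uniform metrical task system with movement cost `α > 0`,
if every state present at the beginning of the phase accumulates service cost
at least `α` over the `n` queries of the phase, then any offline algorithm
(state sequence `σ` starting in a state present at the start of the phase)
pays total service plus movement cost at least `α`. -/
theorem offline_phase_cost_lower_bound (α : ℝ) (hα : 0 < α)
    (n : ℕ) (hn : 1 ≤ n) (S : Type*) [DecidableEq S] (S₀ : Set S)
    (c : S → Fin n → ℝ) (hc : ∀ s i, 0 ≤ c s i)
    (hfull : ∀ s ∈ S₀, α ≤ ∑ i : Fin n, c s i) :
    ∀ σ : Fin n → S, σ ⟨0, hn⟩ ∈ S₀ →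
      α ≤ (∑ i : Fin n, c (σ i) i) +
        α * (Finset.univ.filter
          (fun i : Fin n => ∃ h : (i : ℕ) + 1 < n, σ ⟨(i : ℕ) + 1, h⟩ ≠ σ i)).card := by
  intro σ h0
  set T := Finset.univ.filter
      (fun i : Fin n => ∃ h : (i : ℕ) + 1 < n, σ ⟨(i : ℕ) + 1, h⟩ ≠ σ i) with hT
  rcases T.eq_empty_or_nonempty with he | hne
  · -- no moves: σ is constant
    have hconst : ∀ i : Fin n, σ i = σ ⟨0, hn⟩ := by
      intro ⟨k, hk⟩
      induction k with
      | zero => rfl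
      | succ m ih =>
        have hm : m < n := Nat.lt_of_succ_lt hk
        have : (⟨m, hm⟩ : Fin n) ∉ T := by rw [he]; exact Finset.notMem_empty _
        rw [hT, Finset.mem_filter] at this
        push_neg at this
        have := this (Finset.mem_univ _) hk
        rw [this]
        exact ih hm
    have hsum : (∑ i : Fin n, c (σ i) i) = ∑ i : Fin n, c (σ ⟨0, hn⟩) i :=
      Finset.sum_congr rfl fun i _ => by rw [hconst i]
    rw [he]
    simp only [Finset.card_empty, Nat.cast_zero, mul_zero, add_zero]
    rw [hsum]
    exact hfull _ h0
  · have h1 : (1 : ℝ) ≤ T.card := by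
      exact_mod_cast Finset.one_le_card.mpr hne
    have : α ≤ α * T.card := le_mul_of_one_le_right hα.le h1
    have hs : 0 ≤ ∑ i : Fin n, c (σ i) i :=
      Finset.sum_nonneg fun i _ => hc _ _
    linarith
end

section
/- Let m ≥ 1 be a natural number and β ∈ (0, 1) a real number. Let X be an integer-valued random variable with 1 ≤ X ≤ m almost surely and E[X] ≥ β·m, and let g : ℕ → ℝ be a nonnegative nondecreasing function. Then E[g(m − X)] ≤ (1/2)·g(m) + (1/2)·g(⌊2(1−β)·m⌋). -/
/-! With `Y = m - X` we have `E[Y] ≤ (1 - β) m`, so by Markov's inequality `Y` exceeds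
`c = ⌊2 (1 - β) m⌋` with probability at most `1/2`. As `Y ≤ m` and `g` is monotone,
`g ∘ Y ≤ g (min c m)` off that event and `g ∘ Y ≤ g m` on it, which averages to at most
`(g m + g c) / 2`. -/

open MeasureTheory

section

variable {Ω : Type*} [MeasurableSpace Ω] {μ : Measure Ω}

theorem Monotone.integrable_comp_of_ae_le [IsFiniteMeasure μ] {Y : Ω → ℕ} (hY : Measurable Y)
    {m : ℕ} (hYm : ∀ᵐ ω ∂μ, Y ω ≤ m) {f : ℕ → ℝ} (hf : Monotone f) :
    Integrable (fun ω => f (Y ω)) μ :=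
  .of_bound (measurable_from_nat.comp hY).aestronglyMeasurable (max |f 0| |f m|)
    (hYm.mono fun _ h => abs_le_max_abs_abs (hf (Nat.zero_le _)) (hf h))

theorem integral_natCast_sub [IsProbabilityMeasure μ] {X : Ω → ℕ} (hX : Measurable X) {m : ℕ}
    (hXm : ∀ᵐ ω ∂μ, X ω ≤ m) :
    ∫ ω, ((m - X ω : ℕ) : ℝ) ∂μ = m - ∫ ω, (X ω : ℝ) ∂μ := by
  have hcast : (fun ω => ((m - X ω : ℕ) : ℝ)) =ᵐ[μ] fun ω => (m : ℝ) - X ω :=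
    hXm.mono fun _ h => Nat.cast_sub h
  rw [integral_congr_ae hcast,
    integral_sub (integrable_const _) (Nat.mono_cast.integrable_comp_of_ae_le hX hXm),
    integral_const, probReal_univ, one_smul]

theorem succ_mul_measureReal_lt_le_integral {Y : Ω → ℕ}
    (hY : Integrable (fun ω => (Y ω : ℝ)) μ) (c : ℕ) :
    (c + 1) * μ.real {ω | c < Y ω} ≤ ∫ ω, (Y ω : ℝ) ∂μ := by
  have hset : {ω | c < Y ω} = {ω | ((c : ℝ) + 1) ≤ Y ω} := by
    ext ω
    simp only [Set.mem_ofPred_eq, ← Nat.succ_le_iff]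
    exact_mod_cast Iff.rfl
  rw [hset]
  exact mul_meas_ge_le_integral_of_nonneg (.of_forall fun _ => Nat.cast_nonneg _) hY _

theorem integral_comp_le_half_add_half [IsProbabilityMeasure μ] {Y : Ω → ℕ} (hY : Measurable Y)
    {m c : ℕ} (hYm : ∀ ω, Y ω ≤ m) (hc : μ.real {ω | c < Y ω} ≤ 1 / 2)
    {g : ℕ → ℝ} (hg : Monotone g) :
    ∫ ω, g (Y ω) ∂μ ≤ (1 / 2) * g m + (1 / 2) * g c := by
  set S := {ω | c < Y ω}
  have hS : MeasurableSet S := hY measurableSet_Ioi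
  have hgap : g (min c m) ≤ g m := hg (min_le_right _ _)
  have hpointwise : ∀ ω, g (Y ω) ≤ g (min c m) + S.indicator (fun _ => g m - g (min c m)) ω := by
    intro ω
    by_cases hω : ω ∈ S
    · simpa [Set.indicator_of_mem hω] using hg (hYm ω)
    · simpa [Set.indicator_of_notMem hω] using hg (le_min (not_lt.mp hω) (hYm ω))
  calc ∫ ω, g (Y ω) ∂μ
      ≤ ∫ ω, (g (min c m) + S.indicator (fun _ => g m - g (min c m)) ω) ∂μ :=
        integral_mono (hg.integrable_comp_of_ae_le hY (.of_forall hYm))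
          ((integrable_const _).add ((integrable_const _).indicator hS)) hpointwise
    _ = g (min c m) + μ.real S * (g m - g (min c m)) := by
        rw [integral_add (integrable_const _) ((integrable_const _).indicator hS),
          integral_indicator_const _ hS, integral_const, probReal_univ, one_smul, smul_eq_mul]
    _ ≤ g (min c m) + 1 / 2 * (g m - g (min c m)) := by gcongr
    _ ≤ (1 / 2) * g m + (1 / 2) * g c := by linarith [hg (min_le_left c m)]

end

theorem predictor_expected_transition_bound_general {Ω : Type*} [MeasurableSpace Ω]
    (μ : Measure Ω) [IsProbabilityMeasure μ]
    (m : ℕ) (β : ℝ)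
    (X : Ω → ℕ) (hXmeas : Measurable X)
    (hXm : ∀ᵐ ω ∂μ, X ω ≤ m)
    (hEX : β * m ≤ ∫ ω, (X ω : ℝ) ∂μ)
    (g : ℕ → ℝ) (hgmono : Monotone g) :
    ∫ ω, g (m - X ω) ∂μ ≤ (1 / 2) * g m + (1 / 2) * g ⌊2 * (1 - β) * m⌋₊ := by
  set c := ⌊2 * (1 - β) * m⌋₊
  have hYmeas : Measurable fun ω => m - X ω := measurable_from_nat.comp hXmeas
  have hYm : ∀ ω, m - X ω ≤ m := fun _ => Nat.sub_le _ _
  have hEY : ∫ ω, ((m - X ω : ℕ) : ℝ) ∂μ ≤ (1 - β) * m := by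
    rw [integral_natCast_sub hXmeas hXm]
    linarith
  have hmarkov := succ_mul_measureReal_lt_le_integral
    (Nat.mono_cast.integrable_comp_of_ae_le hYmeas (.of_forall hYm)) (μ := μ) c
  have hc : 2 * (1 - β) * m < c + 1 := Nat.lt_floor_add_one _
  have hhalf : μ.real {ω | c < m - X ω} ≤ 1 / 2 :=
    le_of_mul_le_mul_left (by linarith) (by positivity : (0 : ℝ) < c + 1)
  exact integral_comp_le_half_add_half hYmeas hYm hhalf hgmono

/-- If `X` is an integer-valued random variable with `1 ≤ X ≤ m` almost surely
and `E[X] ≥ β·m`, and `g : ℕ → ℝ` is nonnegative and nondecreasing, then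
`E[g(m − X)] ≤ (1/2)·g(m) + (1/2)·g(⌊2(1−β)·m⌋)`. -/
theorem predictor_expected_transition_bound {Ω : Type*} [MeasurableSpace Ω]
    (μ : Measure Ω) [IsProbabilityMeasure μ]
    (m : ℕ) (hm : 1 ≤ m) (β : ℝ) (hβ0 : 0 < β) (hβ1 : β < 1)
    (X : Ω → ℕ) (hXmeas : Measurable X)
    (hX1 : ∀ᵐ ω ∂μ, 1 ≤ X ω) (hXm : ∀ᵐ ω ∂μ, X ω ≤ m)
    (hEX : β * m ≤ ∫ ω, (X ω : ℝ) ∂μ)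
    (g : ℕ → ℝ) (hg0 : ∀ k, 0 ≤ g k) (hgmono : Monotone g) :
    ∫ ω, g (m - X ω) ∂μ ≤ (1 / 2) * g m + (1 / 2) * g ⌊2 * (1 - β) * m⌋₊ :=
  predictor_expected_transition_bound_general μ m β X hXmeas hXm hEX g hgmono
end
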